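/- Let (W,S) be a Coxeter group, fix a reduced word w = s_{i_1}⋯s_{i_m}, let v ≤ w and let J = {j_1,…,j_r} be the index set of the positive subexpression for v. Let k be the maximal index in {1,…,m} not belonging to J. Then J ∪ {k} is the index set of a positive subexpression of the reduced word for w, i.e., the corresponding subword is reduced, its product u satisfies u ⋗ v in Bruhat order (ℓ(u) = ℓ(v)+1), and J ∪ {k} satisfies the positivity (rightmost reduced) condition for u. -/

import Mathlib

/-!
Write `v = P * Q`, where `P` is the product of the letters of the positive subexpression before
position `k` and `Q` is the product of all letters after `k` (they all lie in `J`). Then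
`u = P * s * Q` for the `k`-th letter `s`, so `u = v * t` for the reflection `t = Q⁻¹ * s * Q`.
Positivity at `k` says `ℓ (P * s) > ℓ P` and reducedness of `ω` says `ℓ (s * Q) > ℓ Q`; together
they force `ℓ u > ℓ v`. As `u` is a product of `ℓ v + 1` letters, `ℓ u = ℓ v + 1` and the subword
for `J ∪ {k}` is reduced, which gives positivity after `k`, since prefixes of reduced words are
reduced.

The inequality `ℓ u > ℓ v` comes from the reflection cocycle `n (w, t) ∈ ZMod 2`, the parity of the
number of occurrences of `t` in the right inversion sequence of any word for `w`. It is well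
defined because it is read off a homomorphism from `W` to the permutations of `W × ZMod 2`, and for
a reflection `t` it detects right inversions: `n (w, t) = 1 ↔ ℓ (w * t) < ℓ w`. Here
`n (P * Q, t) = n (Q, t) + n (P, s) = 0`.
-/

namespace PaperStmt

open CoxeterSystem

variable {B : Type} {W : Type} [Group W] {M : CoxeterMatrix B}

/-- Bruhat covering relation (`v ⋖ u`). -/
def BCov (cs : CoxeterSystem M W) (u w : W) : Prop :=
  (∃ t : W, cs.IsReflection t ∧ w = u * t) ∧ cs.length w = cs.length u + 1

/-- The subword of `ω` at positions of `J` that are `< r`. -/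
def maskWord (ω : List B) (J : Finset (Fin ω.length)) (r : ℕ) : List B :=
  ((List.finRange ω.length).filter (fun j => decide (j ∈ J ∧ j.val < r))).map ω.get

/-- Partial product over `J`-indices `< r`. -/
def prefixEl (cs : CoxeterSystem M W) (ω : List B) (J : Finset (Fin ω.length)) (r : ℕ) : W :=
  cs.wordProd (maskWord ω J r)

/-- `J` is the index set of the positive subexpression of `ω` for `v`. -/
def IsPosSubexpr (cs : CoxeterSystem M W) (ω : List B) (J : Finset (Fin ω.length)) (v : W) :
    Prop :=
  cs.wordProd (maskWord ω J ω.length) = v ∧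
  J.card = cs.length v ∧
  ∀ r : Fin ω.length,
    cs.length (prefixEl cs ω J r.val * cs.simple (ω.get r)) > cs.length (prefixEl cs ω J r.val)

theorem eq_conj_iff_inv_conj_eq {G : Type*} [Group G] (g a t : G) :
    a = g * t * g⁻¹ ↔ g⁻¹ * a * g = t := by
  constructor <;> rintro rfl <;> group

section ReflectionCocycle

variable (cs : CoxeterSystem M W)

open scoped Classical

local prefix:100 "s" => cs.simple

theorem simple_mul_mul_simple_eq_simple_iff (i : B) (t : W) :
    s i * t * s i = s i ↔ t = s i := by
  constructor <;> intro h
  · simpa [mul_assoc] using congrArg (fun x => s i * x * s i) h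
  · simp [h]

noncomputable def simpleReflPerm (i : B) : Equiv.Perm (W × ZMod 2) :=
  Function.Involutive.toPerm
    (fun x => (s i * x.1 * s i, x.2 + if x.1 = s i then 1 else 0))
    (by
      rintro ⟨t, e⟩
      refine Prod.ext (by simp [mul_assoc]) ?_
      simp only [simple_mul_mul_simple_eq_simple_iff, add_assoc, CharTwo.add_self_eq_zero,
        add_zero])

theorem simpleReflPerm_apply (i : B) (t : W) (e : ZMod 2) :
    simpleReflPerm cs i (t, e) = (s i * t * s i, e + if t = s i then 1 else 0) :=
  rfl

theorem simpleReflPerm_mul_pow_apply (i j : B) (n : ℕ) (t : W) (e : ZMod 2) :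
    ((simpleReflPerm cs i * simpleReflPerm cs j) ^ n) (t, e) =
      ((s i * s j) ^ n * t * ((s i * s j) ^ n)⁻¹,
        e + ∑ b ∈ Finset.range (2 * n), if s j * (s i * s j) ^ b = t then 1 else 0) := by
  induction n generalizing t e with
  | zero => simp
  | succ n ih =>
    have hconj : s i * (s j * t * s j) * s i = (s i * s j) * t * (s i * s j)⁻¹ := by
      simp [mul_assoc]
    have hfirst : s j * t * s j = s i ↔ s j * (s i * s j) ^ 1 = t := by
      constructor
      · intro h; simp [← h, mul_assoc]
      · rintro rfl; simp [mul_assoc]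
    have hshift : ∀ b, s j * (s i * s j) ^ b = (s i * s j) * t * (s i * s j)⁻¹ ↔
        s j * (s i * s j) ^ (2 + b) = t := fun b => by
      rw [eq_conj_iff_inv_conj_eq, show 2 + b = 1 + b + 1 by ring, pow_succ, pow_add]
      simp [mul_assoc]
    rw [pow_succ, Equiv.Perm.mul_apply, Equiv.Perm.mul_apply, simpleReflPerm_apply,
      simpleReflPerm_apply, hconj, ih, show 2 * (n + 1) = 2 + 2 * n by ring, Finset.sum_range_add]
    simp only [hshift, hfirst, Finset.sum_range_succ, Finset.sum_range_zero, pow_zero, mul_one]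
    refine Prod.ext (by simp only [pow_succ, mul_inv_rev, mul_assoc]) ?_
    simp only [eq_comm (a := t)]
    ring

-- The `2 * M i j` reflections counted by `simpleReflPerm_mul_pow_apply` repeat with period
-- `M i j`, so every sign flip occurs an even number of times.
theorem isLiftable_simpleReflPerm : M.IsLiftable (simpleReflPerm cs) := by
  intro i j
  refine Equiv.ext ?_
  rintro ⟨t, e⟩
  have hpow := cs.simple_mul_simple_pow i j
  generalize M i j = m at hpow ⊢
  rw [simpleReflPerm_mul_pow_apply, hpow, two_mul, Finset.sum_range_add]
  simp only [pow_add, hpow, one_mul, CharTwo.add_self_eq_zero]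
  simp

noncomputable def reflRep : W →* Equiv.Perm (W × ZMod 2) :=
  cs.lift ⟨simpleReflPerm cs, isLiftable_simpleReflPerm cs⟩

noncomputable def reflCocycle (w t : W) : ZMod 2 :=
  (reflRep cs w (t, 0)).2

theorem reflRep_apply (w t : W) (e : ZMod 2) :
    reflRep cs w (t, e) = (w * t * w⁻¹, e + reflCocycle cs w t) := by
  induction w using cs.simple_induction_left generalizing t e with
  | one => simp [reflCocycle]
  | mul_simple_left w i ih =>
    have hmul : ∀ e', reflRep cs (s i * w) (t, e') =
        (s i * w * t * (s i * w)⁻¹, e' + reflCocycle cs w t +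
          if w * t * w⁻¹ = s i then 1 else 0) := fun e' => by
      rw [map_mul, Equiv.Perm.mul_apply, ih, reflRep, lift_apply_simple, simpleReflPerm_apply]
      simp [mul_assoc]
    conv_rhs => rw [reflCocycle, hmul, zero_add]
    rw [hmul, add_assoc]

theorem reflCocycle_mul (w₁ w₂ t : W) :
    reflCocycle cs (w₁ * w₂) t = reflCocycle cs w₂ t + reflCocycle cs w₁ (w₂ * t * w₂⁻¹) := by
  have h := congrArg Prod.snd (reflRep_apply cs (w₁ * w₂) t 0)
  rw [map_mul, Equiv.Perm.mul_apply, reflRep_apply, reflRep_apply] at h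
  simpa using h.symm

theorem reflCocycle_simple (i : B) (t : W) :
    reflCocycle cs (s i) t = if t = s i then 1 else 0 := by
  simp [reflCocycle, reflRep, simpleReflPerm_apply]

theorem reflCocycle_one (t : W) : reflCocycle cs 1 t = 0 := by
  simp [reflCocycle]

theorem reflCocycle_wordProd (ω : List B) (t : W) :
    reflCocycle cs (cs.wordProd ω) t = (cs.rightInvSeq ω).count t := by
  induction ω with
  | nil => simp [reflCocycle_one]
  | cons i ω ih =>
    have hiff : cs.wordProd ω * t * (cs.wordProd ω)⁻¹ = s i ↔
        (cs.wordProd ω)⁻¹ * s i * cs.wordProd ω = t := by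
      rw [eq_comm, ← inv_inv (cs.wordProd ω), eq_conj_iff_inv_conj_eq, inv_inv, inv_inv]
    simp only [wordProd_cons, reflCocycle_mul, ih, reflCocycle_simple, rightInvSeq,
      List.count_cons, hiff, beq_iff_eq]
    push_cast
    ring

theorem reflCocycle_self {t : W} (ht : cs.IsReflection t) : reflCocycle cs t t = 1 := by
  obtain ⟨x, i, rfl⟩ := ht
  have hinv := reflCocycle_mul cs x x⁻¹ (x * s i * x⁻¹)
  have hconj : x⁻¹ * (x * s i * x⁻¹) * x = s i := by group
  rw [mul_inv_cancel, reflCocycle_one, inv_inv, hconj] at hinv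
  rw [reflCocycle_mul, reflCocycle_mul, inv_inv, hconj, reflCocycle_simple, if_pos rfl,
    mul_inv_cancel_right]
  linear_combination -hinv

theorem length_mul_lt_of_reflCocycle_eq_one {w t : W} (h : reflCocycle cs w t = 1) :
    cs.length (w * t) < cs.length w := by
  obtain ⟨ω, hω, rfl⟩ := cs.exists_isReduced w
  rw [reflCocycle_wordProd] at h
  have hmem : t ∈ cs.rightInvSeq ω :=
    List.count_pos_iff.mp (Nat.pos_of_ne_zero fun h0 => by simp [h0] at h)
  exact (cs.isRightInversion_of_mem_rightInvSeq hω hmem).2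

theorem reflCocycle_eq_zero_iff {w t : W} (ht : cs.IsReflection t) :
    reflCocycle cs w t = 0 ↔ ¬ cs.length (w * t) < cs.length w := by
  have hZMod2 : ∀ x : ZMod 2, x = 0 ↔ x ≠ 1 := by decide
  rw [hZMod2, not_iff_not]
  refine ⟨length_mul_lt_of_reflCocycle_eq_one cs, fun hlt => ?_⟩
  by_contra h
  have hwt : reflCocycle cs (w * t) t = 1 := by
    rw [reflCocycle_mul, reflCocycle_self cs ht, mul_inv_cancel_right, (hZMod2 _).2 h, add_zero]
  have := length_mul_lt_of_reflCocycle_eq_one cs hwt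
  rw [mul_assoc, ht.mul_self, mul_one] at this
  omega

theorem length_mul_lt_length_mul_simple_mul {P Q : W} {i : B}
    (hP : ¬ cs.IsRightDescent P i) (hQ : ¬ cs.IsLeftDescent Q i) :
    cs.length (P * Q) < cs.length (P * (s i * Q)) := by
  have ht : cs.IsReflection (Q⁻¹ * s i * Q) := ⟨Q⁻¹, i, by rw [inv_inv]⟩
  have hP0 : reflCocycle cs P (s i) = 0 :=
    (reflCocycle_eq_zero_iff cs (cs.isReflection_simple i)).2 hP
  have hQ0 : reflCocycle cs Q (Q⁻¹ * s i * Q) = 0 :=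
    (reflCocycle_eq_zero_iff cs ht).2 (by rwa [← mul_assoc, mul_inv_cancel_left])
  have hPQ0 : reflCocycle cs (P * Q) (Q⁻¹ * s i * Q) = 0 := by
    rw [reflCocycle_mul, hQ0, show Q * (Q⁻¹ * s i * Q) * Q⁻¹ = s i by group, hP0, add_zero]
  have hne := ht.length_mul_left_ne (P * Q)
  have hnlt := (reflCocycle_eq_zero_iff cs ht).1 hPQ0
  rw [show P * Q * (Q⁻¹ * s i * Q) = P * (s i * Q) by group] at hne hnlt
  omega

end ReflectionCocycle

theorem val_lt_of_mem_take_finRange {n r : ℕ} {j : Fin n} (h : j ∈ (List.finRange n).take r) :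
    j.val < r := by
  obtain ⟨i, hi, rfl⟩ := List.getElem_of_mem h
  simp only [List.length_take, List.length_finRange] at hi
  simp only [List.getElem_take, List.getElem_finRange, Fin.val_cast]
  omega

theorem le_val_of_mem_drop_finRange {n r : ℕ} {j : Fin n} (h : j ∈ (List.finRange n).drop r) :
    r ≤ j.val := by
  obtain ⟨i, hi, rfl⟩ := List.getElem_of_mem h
  simp only [List.getElem_drop, List.getElem_finRange, Fin.val_cast]
  omega

section MaskWord

variable (ω : List B) (J : Finset (Fin ω.length))

theorem maskWord_eq_map_filter_take (r : ℕ) :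
    maskWord ω J r = (((List.finRange ω.length).take r).filter (· ∈ J)).map ω.get := by
  rw [maskWord]
  congr 1
  conv_lhs => rw [← List.take_append_drop r (List.finRange ω.length)]
  have hdrop : ((List.finRange ω.length).drop r).filter (fun j => decide (j ∈ J ∧ j.val < r)) =
      [] :=
    List.filter_eq_nil_iff.mpr fun j hj => by simp [le_val_of_mem_drop_finRange hj]
  rw [List.filter_append, hdrop, List.append_nil]
  exact List.filter_congr fun j hj => by simp [val_lt_of_mem_take_finRange hj]

theorem maskWord_succ (r : ℕ) (hr : r < ω.length) :
    maskWord ω J (r + 1) =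
      maskWord ω J r ++ if (⟨r, hr⟩ : Fin ω.length) ∈ J then [ω.get ⟨r, hr⟩] else [] := by
  rw [maskWord_eq_map_filter_take, maskWord_eq_map_filter_take, List.take_add_one,
    List.getElem?_eq_getElem (by simpa using hr), Option.toList_some, List.filter_append,
    List.map_append]
  split_ifs with hrJ <;> simp [hrJ]

theorem maskWord_insert_of_le {k : Fin ω.length} {r : ℕ} (hr : r ≤ k.val) :
    maskWord ω (insert k J) r = maskWord ω J r := by
  rw [maskWord_eq_map_filter_take, maskWord_eq_map_filter_take]
  congr 1
  refine List.filter_congr fun j hj => ?_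
  have hjk : j ≠ k := Fin.ne_of_val_ne (by have := val_lt_of_mem_take_finRange hj; omega)
  simp [hjk]

theorem maskWord_prefix {r r' : ℕ} (h : r ≤ r') : maskWord ω J r <+: maskWord ω J r' := by
  rw [maskWord_eq_map_filter_take, maskWord_eq_map_filter_take]
  exact ((List.take_prefix_take_left h).filter _).map _

theorem length_maskWord_length : (maskWord ω J ω.length).length = J.card := by
  have hnd := (List.nodup_finRange ω.length).filter (fun j => decide (j ∈ J ∧ j.val < ω.length))
  rw [maskWord, List.length_map, ← List.toFinset_card_of_nodup hnd]
  congr 1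
  ext j
  simp

theorem maskWord_add_of_forall_mem (a d : ℕ) (hd : a + d ≤ ω.length)
    (hJ : ∀ j : Fin ω.length, a ≤ j.val → j.val < a + d → j ∈ J) :
    maskWord ω J (a + d) = maskWord ω J a ++ (ω.drop a).take d := by
  induction d with
  | zero => simp
  | succ d ih =>
    have had : a + d < ω.length := by omega
    rw [← add_assoc, maskWord_succ ω J _ had, if_pos (hJ _ (by simp) (by simp)),
      ih (by omega) fun j h1 h2 => hJ j h1 (by omega), List.append_assoc,
      List.take_add_one, List.getElem?_drop, List.getElem?_eq_getElem had]
    simp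

theorem maskWord_length_eq_append_drop (a : ℕ) (ha : a ≤ ω.length)
    (hJ : ∀ j : Fin ω.length, a ≤ j.val → j ∈ J) :
    maskWord ω J ω.length = maskWord ω J a ++ ω.drop a := by
  have h := maskWord_add_of_forall_mem ω J a (ω.length - a) (by omega) fun j h _ => hJ j h
  rwa [Nat.add_sub_cancel' ha, List.take_of_length_le (by simp)] at h

theorem maskWord_length_eq_append_drop_succ {k : Fin ω.length} (hk : k ∉ J)
    (hkmax : ∀ r : Fin ω.length, k < r → r ∈ J) :
    maskWord ω J ω.length = maskWord ω J k.val ++ ω.drop (k.val + 1) := by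
  rw [maskWord_length_eq_append_drop ω J (k.val + 1) k.isLt fun j hj => hkmax j hj,
    maskWord_succ ω J k.val k.isLt, Fin.eta, if_neg hk, List.append_nil]

theorem maskWord_insert_length_eq_append_drop {k : Fin ω.length}
    (hkmax : ∀ r : Fin ω.length, k < r → r ∈ J) :
    maskWord ω (insert k J) ω.length = maskWord ω J k.val ++ ω.drop k.val := by
  rw [maskWord_length_eq_append_drop ω _ k.val k.isLt.le fun j hj => ?_,
    maskWord_insert_of_le ω J le_rfl]
  rcases hj.eq_or_lt with hkj | hkj
  · exact Finset.mem_insert.2 (Or.inl (Fin.ext hkj.symm))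
  · exact Finset.mem_insert_of_mem (hkmax j hkj)

end MaskWord

theorem not_isLeftDescent_wordProd_of_isReduced_cons (cs : CoxeterSystem M W) {i : B}
    {ω : List B} (h : cs.IsReduced (i :: ω)) : ¬ cs.IsLeftDescent (cs.wordProd ω) i := by
  have hlen : cs.length (cs.simple i * cs.wordProd ω) = ω.length + 1 := by
    rw [← wordProd_cons]
    exact h
  have := cs.length_wordProd_le ω
  unfold IsLeftDescent
  omega

theorem lt_length_prefixEl_mul_simple_of_isReduced (cs : CoxeterSystem M W) (ω : List B)
    (J : Finset (Fin ω.length)) (hJ : cs.IsReduced (maskWord ω J ω.length))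
    {r : Fin ω.length} (hr : r ∈ J) :
    cs.length (prefixEl cs ω J r.val * cs.simple (ω.get r)) >
      cs.length (prefixEl cs ω J r.val) := by
  have hsucc : maskWord ω J (r.val + 1) = maskWord ω J r.val ++ [ω.get r] := by
    rw [maskWord_succ ω J r.val r.isLt, Fin.eta, if_pos hr]
  have hred : cs.IsReduced (maskWord ω J (r.val + 1)) := by
    rw [List.prefix_iff_eq_take.mp (maskWord_prefix ω J r.isLt)]
    exact hJ.take _
  rw [CoxeterSystem.IsReduced, hsucc, wordProd_append, wordProd_singleton, List.length_append,
    List.length_singleton] at hred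
  have := cs.length_wordProd_le (maskWord ω J r.val)
  unfold prefixEl
  omega

theorem lt_length_prefixEl_insert_mul_simple (cs : CoxeterSystem M W) (ω : List B)
    (J : Finset (Fin ω.length)) {k : Fin ω.length}
    (hposJ : ∀ r : Fin ω.length,
      cs.length (prefixEl cs ω J r.val * cs.simple (ω.get r)) > cs.length (prefixEl cs ω J r.val))
    (hkmax : ∀ r : Fin ω.length, k < r → r ∈ J)
    (hred : cs.IsReduced (maskWord ω (insert k J) ω.length)) (r : Fin ω.length) :
    cs.length (prefixEl cs ω (insert k J) r.val * cs.simple (ω.get r)) >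
      cs.length (prefixEl cs ω (insert k J) r.val) := by
  rcases le_or_gt r.val k.val with hrk | hkr
  · rw [prefixEl, maskWord_insert_of_le ω J hrk]
    exact hposJ r
  · exact lt_length_prefixEl_mul_simple_of_isReduced cs ω _ hred
      (Finset.mem_insert_of_mem (hkmax r hkr))

theorem insert_max_missing_index_is_positive_and_covers
    (cs : CoxeterSystem M W) (ω : List B) (v : W) (J : Finset (Fin ω.length))
    (hred : cs.IsReduced ω)
    (hpos : IsPosSubexpr cs ω J v)
    (k : Fin ω.length) (hk : k ∉ J) (hkmax : ∀ r : Fin ω.length, k < r → r ∈ J) :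
    IsPosSubexpr cs ω (insert k J)
        (cs.wordProd (maskWord ω (insert k J) ω.length)) ∧
      BCov cs v (cs.wordProd (maskWord ω (insert k J) ω.length)) := by
  obtain ⟨hv, hcard, hposJ⟩ := hpos
  have hdrop : ω.drop k.val = ω.get k :: ω.drop (k.val + 1) := List.drop_eq_getElem_cons k.isLt
  set P := cs.wordProd (maskWord ω J k.val)
  set Q := cs.wordProd (ω.drop (k.val + 1))
  set u := cs.wordProd (maskWord ω (insert k J) ω.length) with hu_def
  have hv' : v = P * Q := by
    rw [← hv, maskWord_length_eq_append_drop_succ ω J hk hkmax, wordProd_append]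
  have hu : u = P * (cs.simple (ω.get k) * Q) := by
    rw [hu_def, maskWord_insert_length_eq_append_drop ω J hkmax, hdrop, wordProd_append,
      wordProd_cons]
  have hlt : cs.length v < cs.length u := by
    rw [hv', hu]
    exact length_mul_lt_length_mul_simple_mul cs (fun h => lt_asymm h (hposJ k))
      (not_isLeftDescent_wordProd_of_isReduced_cons cs (hdrop ▸ hred.drop k.val))
  have hwordLen : (maskWord ω (insert k J) ω.length).length = cs.length v + 1 := by
    rw [length_maskWord_length, Finset.card_insert_of_notMem hk, hcard]
  have hlen : cs.length u = cs.length v + 1 :=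
    le_antisymm (hwordLen ▸ cs.length_wordProd_le _) hlt
  refine ⟨⟨rfl, by rw [Finset.card_insert_of_notMem hk, hcard, hlen],
    lt_length_prefixEl_insert_mul_simple cs ω J hposJ hkmax (hlen.trans hwordLen.symm)⟩,
    ⟨Q⁻¹ * cs.simple (ω.get k) * Q, ⟨Q⁻¹, ω.get k, by rw [inv_inv]⟩, by rw [hu, hv']; group⟩,
    hlen⟩

end PaperStmt
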